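/- arXiv:2208.03996 — 2 statements merged into one kernel-verified Lean document; each statement's English description precedes it below -/
import Mathlib

section
/- Define operators D_x and D_y on bivariate formal power series over ℚ by: the (r,s)-coefficient of D_x f is r times the (r,s)-coefficient of f, and the (r,s)-coefficient of D_y f is s times the (r,s)-coefficient of f. Then, with Z = T_x + T_y and W = T_x·T_y, the following identities hold: (1-T_y)·(D_x Z) + (1-T_x)·(D_y Z) = Z, and (1-T_y)·(D_x W) + (1-T_x)·(D_y W) = 2W. -/
/-!
Write `N(r, s) = Nbi r s 0`; it counts the spanning trees of the complete bipartite graph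
`K_{r,s}`. A tree on `r + s` vertices has `r + s - 1` edges, so `(r + s - 1) N(r, s)` counts
trees with a marked edge `xy`. Deleting that edge leaves two trees: the component of `x`, on
parts `A ∋ x` and `B`, and the component of `y`, on the complementary parts; conversely, two such
trees joined by an edge `xy` form a tree. Hence
`(r + s) N(r, s) = N(r, s) + ∑ C(r, i) C(s, j) · i N(i, j) · (s - j) N(r - i, s - j)`,
which is the coefficient form of `Tx + Ty = Fk 0 + Tx * Ty`. Applying the derivations `Dx` and
`Dy` to this identity and using `Dx (Fk 0) = Tx`, `Dy (Fk 0) = Ty`, `Dx Ty = Dy Tx` gives two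
identities of which the claimed ones are linear combinations.
-/

open Finset

/-- Number of simple connected bipartite graphs on the labeled vertex set
`Fin r ⊕ Fin s`, with all edges joining the two parts and exactly
`r + s - 1 + k` edges (so `k` is the Betti number). -/
noncomputable def Nbi (r s k : ℕ) : ℕ :=
  Nat.card {G : SimpleGraph (Fin r ⊕ Fin s) //
    G.Connected ∧
    (∀ a b, ¬ G.Adj (Sum.inl a) (Sum.inl b)) ∧
    (∀ a b, ¬ G.Adj (Sum.inr a) (Sum.inr b)) ∧
    Nat.card G.edgeSet = r + s - 1 + k}

/-- `F_k(x,y) = ∑ N_bi(r,s,k) x^r y^s / (r! s!)`. -/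
noncomputable def Fk (k : ℕ) : MvPowerSeries (Fin 2) ℚ :=
  fun m => (Nbi (m 0) (m 1) k : ℚ) / ((m 0).factorial * (m 1).factorial)

/-- `T_x = x ∂T/∂x`, coefficientwise `r · N_bi(r,s,0)/(r! s!)`. -/
noncomputable def Tx : MvPowerSeries (Fin 2) ℚ :=
  fun m => (m 0 : ℚ) * (Nbi (m 0) (m 1) 0 : ℚ) / ((m 0).factorial * (m 1).factorial)

/-- `T_y = y ∂T/∂y`, coefficientwise `s · N_bi(r,s,0)/(r! s!)`. -/
noncomputable def Ty : MvPowerSeries (Fin 2) ℚ :=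
  fun m => (m 1 : ℚ) * (Nbi (m 0) (m 1) 0 : ℚ) / ((m 0).factorial * (m 1).factorial)

noncomputable def Zs : MvPowerSeries (Fin 2) ℚ := Tx + Ty

noncomputable def Ws : MvPowerSeries (Fin 2) ℚ := Tx * Ty

/-- The Euler operator `D_x = x ∂/∂x` acting coefficientwise. -/
noncomputable def Dx (f : MvPowerSeries (Fin 2) ℚ) : MvPowerSeries (Fin 2) ℚ :=
  fun m => (m 0 : ℚ) * MvPowerSeries.coeff m f

/-- The Euler operator `D_y = y ∂/∂y` acting coefficientwise. -/
noncomputable def Dy (f : MvPowerSeries (Fin 2) ℚ) : MvPowerSeries (Fin 2) ℚ :=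
  fun m => (m 1 : ℚ) * MvPowerSeries.coeff m f

namespace SimpleGraph

variable {V W : Type*}

lemma Reachable.of_sum_inl {G : SimpleGraph V} {H : SimpleGraph W} {v v' : V}
    (h : (G ⊕g H).Reachable (.inl v) (.inl v')) : G.Reachable v v' := by
  obtain ⟨p⟩ := h
  suffices ∀ {a b : V ⊕ W} (q : (G ⊕g H).Walk a b) (v v' : V), a = .inl v → b = .inl v' →
      G.Reachable v v' from this p v v' rfl rfl
  intro a b q
  induction q with
  | nil => rintro v v' rfl ⟨⟩; rfl
  | @cons a c b hadj q ih =>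
    rintro v v' rfl rfl
    cases c with
    | inl c => exact (sum_adj_inl.mp hadj).reachable.trans (ih c v' rfl rfl)
    | inr c => exact absurd hadj (not_adj_sum_inl_inr _ _)

lemma Reachable.of_sum_inr {G : SimpleGraph V} {H : SimpleGraph W} {w w' : W}
    (h : (G ⊕g H).Reachable (.inr w) (.inr w')) : H.Reachable w w' :=
  Reachable.of_sum_inl (Iso.sumComm.reachable_iff.mpr h)

lemma eq_sum_comap_of_not_adj {J : SimpleGraph (V ⊕ W)}
    (h : ∀ v w, ¬ J.Adj (.inl v) (.inr w)) : J = J.comap .inl ⊕g J.comap .inr := by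
  ext (v | w) (v' | w')
  · rfl
  · simpa using h v w'
  · simpa [J.adj_comm] using h v' w
  · rfl

lemma Reachable.of_sup_edge {G : SimpleGraph V} {a b v : V}
    (h : (G ⊔ edge a b).Reachable a v) : G.Reachable a v ∨ G.Reachable b v := by
  obtain ⟨p⟩ := h
  suffices ∀ {u w : V} (q : (G ⊔ edge a b).Walk u w),
      G.Reachable a u ∨ G.Reachable b u → G.Reachable a w ∨ G.Reachable b w from
    this p (.inl .rfl)
  intro u w q
  induction q with
  | nil => exact id
  | @cons u c w hadj q ih =>
    refine fun hu => ih ?_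
    rcases hadj with hadj | hadj
    · exact hu.imp (·.trans hadj.reachable) (·.trans hadj.reachable)
    · rcases (edge_adj _ _ _ _).mp hadj with ⟨⟨rfl, rfl⟩ | ⟨rfl, rfl⟩, -⟩
      · exact .inr .rfl
      · exact .inl .rfl

lemma adj_sup_edge (G : SimpleGraph V) {a b : V} (hab : a ≠ b) : (G ⊔ edge a b).Adj a b :=
  .inr ((edge_adj _ _ _ _).mpr ⟨.inl ⟨rfl, rfl⟩, hab⟩)

lemma IsTree.not_reachable_of_sup_edge {G : SimpleGraph V} {a b : V}
    (hG : (G ⊔ edge a b).IsTree) (hn : ¬ G.Adj a b) (hab : a ≠ b) : ¬ G.Reachable a b := by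
  have hbridge := isAcyclic_iff_forall_adj_isBridge.mp hG.isAcyclic (G.adj_sup_edge hab)
  exact (isBridge_sup_edge.mp hbridge).reachable_iff_adj.not.mpr hn

lemma card_edgeSet_sum [Finite V] [Finite W] (G : SimpleGraph V) (H : SimpleGraph W) :
    Nat.card (G ⊕g H).edgeSet = Nat.card G.edgeSet + Nat.card H.edgeSet := by
  rw [Nat.card_congr edgeSetSumEquiv, Nat.card_sum]

lemma card_edgeSet_sup_edge [Finite V] {G : SimpleGraph V} {a b : V} (hn : ¬ G.Adj a b)
    (hab : a ≠ b) : Nat.card (G ⊔ edge a b).edgeSet = Nat.card G.edgeSet + 1 := by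
  rw [Nat.card_coe_set_eq, Nat.card_coe_set_eq, edgeSet_sup, edgeSet_edge_of_ne hab,
    Set.union_singleton, Set.ncard_insert_of_notMem (by simpa using hn)]

end SimpleGraph

open SimpleGraph

section BipartiteTrees

variable {α β α' β' : Type*}

variable (α β) in
def bipartiteTrees : Set (SimpleGraph (α ⊕ β)) :=
  {G | G ≤ completeBipartiteGraph α β ∧ G.IsTree}

lemma le_completeBipartiteGraph_iff {G : SimpleGraph (α ⊕ β)} :
    G ≤ completeBipartiteGraph α β ↔
      (∀ a a', ¬ G.Adj (.inl a) (.inl a')) ∧ ∀ b b', ¬ G.Adj (.inr b) (.inr b') := by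
  refine ⟨fun h => ⟨fun a a' hadj => by simpa using h hadj, fun b b' hadj => by
    simpa using h hadj⟩, ?_⟩
  rintro ⟨hl, hr⟩ (a | b) (a' | b') hadj <;> simp_all

lemma comap_sumMap_le_completeBipartiteGraph {H : SimpleGraph (α ⊕ β)} {f : α' → α}
    {g : β' → β} (hH : H ≤ completeBipartiteGraph α β) :
    H.comap (Sum.map f g) ≤ completeBipartiteGraph α' β' := by
  rw [le_completeBipartiteGraph_iff] at hH ⊢
  exact ⟨fun a a' => hH.1 (f a) (f a'), fun b b' => hH.2 (g b) (g b')⟩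

lemma nbi_zero_eq_card_bipartiteTrees (r s : ℕ) :
    Nbi r s 0 = Nat.card (bipartiteTrees (Fin r) (Fin s)) := by
  refine Nat.card_congr (Equiv.subtypeEquivRight fun G => ?_)
  rw [bipartiteTrees, Set.mem_ofPred_eq, le_completeBipartiteGraph_iff,
    isTree_iff_connected_and_card, Nat.card_sum, Nat.card_fin, Nat.card_fin, add_zero]
  constructor
  · rintro ⟨hc, hl, hr, he⟩
    have : 0 < r + s := by simpa using Fintype.card_pos_iff.mpr hc.nonempty
    exact ⟨⟨hl, hr⟩, hc, by omega⟩
  · rintro ⟨⟨hl, hr⟩, hc, he⟩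
    exact ⟨hc, hl, hr, by omega⟩

lemma card_bipartiteTrees_congr (e₁ : α ≃ α') (e₂ : β ≃ β') :
    Nat.card (bipartiteTrees α β) = Nat.card (bipartiteTrees α' β') := by
  refine Nat.card_congr ((Equiv.sumCongr e₁ e₂).simpleGraph.subtypeEquiv fun G => ?_)
  simp only [bipartiteTrees, Set.mem_ofPred_eq, Equiv.simpleGraph_apply,
    (Iso.comap _ G).isTree_iff, le_completeBipartiteGraph_iff, comap_adj]
  simp [e₁.symm.forall_congr_left, e₂.symm.forall_congr_left]

lemma card_bipartiteTrees [Finite α] [Finite β] :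
    Nat.card (bipartiteTrees α β) = Nbi (Nat.card α) (Nat.card β) 0 := by
  rw [nbi_zero_eq_card_bipartiteTrees]
  exact card_bipartiteTrees_congr (Finite.equivFin α) (Finite.equivFin β)

lemma card_adj_inl_inr_eq_card_edgeSet {G : SimpleGraph (α ⊕ β)}
    (hG : G ≤ completeBipartiteGraph α β) :
    Nat.card {p : α × β // G.Adj (.inl p.1) (.inr p.2)} = Nat.card G.edgeSet := by
  refine Nat.card_congr (.ofBijective (fun p => ⟨s(.inl p.1.1, .inr p.1.2), p.2⟩) ⟨?_, ?_⟩)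
  · rintro ⟨⟨a, b⟩, _⟩ ⟨⟨a', b'⟩, _⟩ h
    simpa using congrArg Subtype.val h
  · rintro ⟨e, he⟩
    induction e with
    | _ u v =>
      rcases u with a | b <;> rcases v with a' | b'
      · exact absurd (hG he) (by simp)
      · exact ⟨⟨(a, b'), he⟩, rfl⟩
      · exact ⟨⟨(a', b), G.adj_symm he⟩, Subtype.ext Sym2.eq_swap⟩
      · exact absurd (hG he) (by simp)

variable (α β) in
def edgeMarkedTrees : Type _ :=
  {q : SimpleGraph (α ⊕ β) × α × β //
    q.1 ∈ bipartiteTrees α β ∧ q.1.Adj (.inl q.2.1) (.inr q.2.2)}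

instance [Finite α] [Finite β] : Finite (edgeMarkedTrees α β) :=
  Subtype.finite

lemma card_edgeMarkedTrees_add [Fintype α] [Fintype β] :
    Nat.card (edgeMarkedTrees α β) + Nat.card (bipartiteTrees α β) =
      (Fintype.card α + Fintype.card β) * Nat.card (bipartiteTrees α β) := by
  have := Fintype.ofFinite (bipartiteTrees α β)
  let e : edgeMarkedTrees α β ≃
      Σ G : bipartiteTrees α β, {p : α × β // G.1.Adj (.inl p.1) (.inr p.2)} :=
    { toFun := fun q => ⟨⟨q.1.1, q.2.1⟩, ⟨q.1.2, q.2.2⟩⟩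
      invFun := fun q => ⟨(q.1.1, q.2.1), q.1.2, q.2.2⟩ }
  have hcard (G : bipartiteTrees α β) :
      Nat.card {p : α × β // G.1.Adj (.inl p.1) (.inr p.2)} + 1 =
        Fintype.card α + Fintype.card β := by
    rw [card_adj_inl_inr_eq_card_edgeSet G.2.1, (isTree_iff_connected_and_card.mp G.2.2).2,
      Nat.card_sum, Nat.card_eq_fintype_card, Nat.card_eq_fintype_card]
  rw [Nat.card_congr e, Nat.card_sigma, Nat.card_eq_fintype_card, ← Finset.card_univ, mul_comm,
    ← Finset.sum_const_nat fun G _ => hcard G, Finset.sum_add_distrib, Finset.card_eq_sum_ones]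

end BipartiteTrees

section Split

variable {α β : Type*} [DecidableEq α] [DecidableEq β] {A : Finset α} {B : Finset β}

variable (A B) in
def splitEquiv : (A ⊕ B) ⊕ ({a // a ∉ A} ⊕ {b // b ∉ B}) ≃ α ⊕ β :=
  (Equiv.sumSumSumComm _ _ _ _).trans
    ((Equiv.sumCompl (· ∈ A)).sumCongr (Equiv.sumCompl (· ∈ B)))

@[simp] lemma splitEquiv_inl (u : A ⊕ B) : splitEquiv A B (.inl u) = Sum.map (↑) (↑) u := by
  rcases u with a | b <;> rfl

@[simp] lemma splitEquiv_inr (w : {a // a ∉ A} ⊕ {b // b ∉ B}) :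
    splitEquiv A B (.inr w) = Sum.map (↑) (↑) w := by
  rcases w with a | b <;> rfl

variable (A B) in
lemma splitEquiv_comp_inl : splitEquiv A B ∘ .inl = Sum.map (↑) (↑) := by
  funext u; simp

variable (A B) in
lemma splitEquiv_comp_inr : splitEquiv A B ∘ .inr = Sum.map (↑) (↑) := by
  funext w; simp

lemma splitEquiv_symm_inl {a : α} (ha : a ∈ A) :
    (splitEquiv A B).symm (.inl a) = .inl (.inl ⟨a, ha⟩) :=
  (splitEquiv A B).symm_apply_eq.mpr rfl

lemma splitEquiv_symm_inr {b : β} (hb : b ∉ B) :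
    (splitEquiv A B).symm (.inr b) = .inr (.inr ⟨b, hb⟩) :=
  (splitEquiv A B).symm_apply_eq.mpr rfl

lemma elim_mem_splitEquiv_iff (t) :
    Sum.elim (· ∈ A) (· ∈ B) (splitEquiv A B t) ↔ t.isLeft := by
  rcases t with (⟨a, ha⟩ | ⟨b, hb⟩) | (⟨a, ha⟩ | ⟨b, hb⟩) <;> simp [splitEquiv, *]

variable [Fintype α] [Fintype β]

lemma card_sum_add_card_sum_compl :
    Nat.card (A ⊕ B) + Nat.card ({a // a ∉ A} ⊕ {b // b ∉ B}) = Nat.card (α ⊕ β) := by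
  rw [← Nat.card_sum, Nat.card_congr (splitEquiv A B)]

noncomputable def reachableParts (H : SimpleGraph (α ⊕ β)) (x : α) : Finset α × Finset β := by
  classical
  exact (Finset.univ.filter fun a => H.Reachable (.inl x) (.inl a),
    Finset.univ.filter fun b => H.Reachable (.inl x) (.inr b))

lemma reachableParts_eq_iff {H : SimpleGraph (α ⊕ β)} {x : α} :
    reachableParts H x = (A, B) ↔ ∀ t, H.Reachable (.inl x) (splitEquiv A B t) ↔ t.isLeft := by
  simp_rw [← elim_mem_splitEquiv_iff, (splitEquiv A B).forall_congr_right (q := fun v =>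
    H.Reachable (.inl x) v ↔ Sum.elim (· ∈ A) (· ∈ B) v)]
  simp [reachableParts, Prod.ext_iff, Finset.ext_iff, Sum.forall, iff_comm]

lemma mem_reachableParts_fst_self (H : SimpleGraph (α ⊕ β)) (x : α) :
    x ∈ (reachableParts H x).1 := by
  simp [reachableParts]

lemma mem_reachableParts_snd {H : SimpleGraph (α ⊕ β)} {x : α} {b : β} :
    b ∈ (reachableParts H x).2 ↔ H.Reachable (.inl x) (.inr b) := by
  simp [reachableParts]

end Split

section Cut

variable {α β : Type*} [Fintype α] [Fintype β] [DecidableEq α] [DecidableEq β]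
  {A : Finset α} {B : Finset β} {H : SimpleGraph (α ⊕ β)} {x : α} {y : β}

lemma comap_splitEquiv_eq_sum (hH : reachableParts H x = (A, B)) :
    H.comap (splitEquiv A B) =
      H.comap (splitEquiv A B ∘ .inl) ⊕g H.comap (splitEquiv A B ∘ .inr) := by
  rw [← comap_comap, ← comap_comap]
  refine eq_sum_comap_of_not_adj fun u w hadj => ?_
  have hu := (reachableParts_eq_iff.mp hH (.inl u)).mpr rfl
  simpa using (reachableParts_eq_iff.mp hH (.inr w)).mp
    (hu.trans (show H.Adj _ _ from hadj).reachable)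

lemma comap_sum_comap_splitEquiv (hH : reachableParts H x = (A, B)) :
    (H.comap (splitEquiv A B ∘ .inl) ⊕g H.comap (splitEquiv A B ∘ .inr)).comap
      (splitEquiv A B).symm = H := by
  rw [← comap_splitEquiv_eq_sum hH, comap_comap, Equiv.self_comp_symm, comap_id]

lemma reachable_sum_comap_splitEquiv_iff (hH : reachableParts H x = (A, B)) {s t} :
    (H.comap (splitEquiv A B ∘ .inl) ⊕g H.comap (splitEquiv A B ∘ .inr)).Reachable s t ↔
      H.Reachable (splitEquiv A B s) (splitEquiv A B t) :=
  comap_splitEquiv_eq_sum hH ▸ (Iso.comap _ H).reachable_iff.symm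

lemma mem_of_reachableParts_eq (hH : reachableParts H x = (A, B)) : x ∈ A := by
  simpa [hH] using mem_reachableParts_fst_self H x

lemma notMem_of_reachableParts_eq (hG : (H ⊔ edge (.inl x) (.inr y)).IsTree)
    (hn : ¬ H.Adj (.inl x) (.inr y)) (hH : reachableParts H x = (A, B)) : y ∉ B := fun hy =>
  hG.not_reachable_of_sup_edge hn Sum.inl_ne_inr
    (mem_reachableParts_snd.mp (by rw [hH]; exact hy))

lemma connected_comap_splitEquiv_inl (hH : reachableParts H x = (A, B)) :
    (H.comap (splitEquiv A B ∘ .inl)).Connected := by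
  refine (connected_iff_exists_forall_reachable _).mpr
    ⟨.inl ⟨x, mem_of_reachableParts_eq hH⟩, fun u => ?_⟩
  exact ((reachable_sum_comap_splitEquiv_iff hH).mpr
    ((reachableParts_eq_iff.mp hH (.inl u)).mpr rfl)).of_sum_inl

lemma connected_comap_splitEquiv_inr (hG : (H ⊔ edge (.inl x) (.inr y)).IsTree)
    (hn : ¬ H.Adj (.inl x) (.inr y)) (hH : reachableParts H x = (A, B)) :
    (H.comap (splitEquiv A B ∘ .inr)).Connected := by
  refine (connected_iff_exists_forall_reachable _).mpr
    ⟨.inr ⟨y, notMem_of_reachableParts_eq hG hn hH⟩, fun w => ?_⟩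
  have hw : ¬ H.Reachable (.inl x) (splitEquiv A B (.inr w)) := fun h => by
    simpa using (reachableParts_eq_iff.mp hH _).mp h
  have := (hG.connected.preconnected _ _).of_sup_edge.resolve_left hw
  exact ((reachable_sum_comap_splitEquiv_iff hH).mpr this).of_sum_inr

lemma isTree_comap_splitEquiv (hG : (H ⊔ edge (.inl x) (.inr y)).IsTree)
    (hn : ¬ H.Adj (.inl x) (.inr y)) (hH : reachableParts H x = (A, B)) :
    (H.comap (splitEquiv A B ∘ .inl)).IsTree ∧ (H.comap (splitEquiv A B ∘ .inr)).IsTree := by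
  have hconn₁ := connected_comap_splitEquiv_inl hH
  have hconn₂ := connected_comap_splitEquiv_inr hG hn hH
  have hE : Nat.card (H.comap (splitEquiv A B ∘ .inl)).edgeSet +
      Nat.card (H.comap (splitEquiv A B ∘ .inr)).edgeSet + 2 = Nat.card (α ⊕ β) := by
    rw [← card_edgeSet_sum, ← comap_splitEquiv_eq_sum hH,
      Nat.card_congr (Iso.comap (splitEquiv A B) H).mapEdgeSet,
      ← (isTree_iff_connected_and_card.mp hG).2, card_edgeSet_sup_edge hn Sum.inl_ne_inr]
  have hV := card_sum_add_card_sum_compl (A := A) (B := B)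
  have h₁ := hconn₁.card_vert_le_card_edgeSet_add_one
  have h₂ := hconn₂.card_vert_le_card_edgeSet_add_one
  exact ⟨isTree_iff_connected_and_card.mpr ⟨hconn₁, by omega⟩,
    isTree_iff_connected_and_card.mpr ⟨hconn₂, by omega⟩⟩

end Cut

section Glue

variable {α β : Type*} [DecidableEq α] [DecidableEq β]
  {A : Finset α} {B : Finset β} {T₁ : SimpleGraph (A ⊕ B)}
  {T₂ : SimpleGraph ({a // a ∉ A} ⊕ {b // b ∉ B})} {x : α} {y : β}

lemma reachable_comap_sum_iff {s t : α ⊕ β} :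
    ((T₁ ⊕g T₂).comap (splitEquiv A B).symm).Reachable s t ↔
      (T₁ ⊕g T₂).Reachable ((splitEquiv A B).symm s) ((splitEquiv A B).symm t) :=
  (Iso.comap _ _).reachable_iff.symm

lemma comap_comap_sum_inl :
    ((T₁ ⊕g T₂).comap (splitEquiv A B).symm).comap (splitEquiv A B ∘ .inl) = T₁ := by
  ext u v
  simp only [comap_adj, Function.comp_apply, Equiv.symm_apply_apply, sum_adj_inl]

lemma comap_comap_sum_inr :
    ((T₁ ⊕g T₂).comap (splitEquiv A B).symm).comap (splitEquiv A B ∘ .inr) = T₂ := by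
  ext u v
  simp only [comap_adj, Function.comp_apply, Equiv.symm_apply_apply, sum_adj_inr]

lemma comap_sum_le_completeBipartiteGraph (h₁ : T₁ ≤ completeBipartiteGraph A B)
    (h₂ : T₂ ≤ completeBipartiteGraph {a // a ∉ A} {b // b ∉ B}) :
    (T₁ ⊕g T₂).comap (splitEquiv A B).symm ≤ completeBipartiteGraph α β := by
  intro u v huv
  obtain ⟨s, rfl⟩ := (splitEquiv A B).surjective u
  obtain ⟨t, rfl⟩ := (splitEquiv A B).surjective v
  simp only [comap_adj, Equiv.symm_apply_apply] at huv
  rcases s with s | s <;> rcases t with t | t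
  · simpa using h₁ (sum_adj_inl.mp huv)
  · simp at huv
  · simp at huv
  · simpa using h₂ (sum_adj_inr.mp huv)

lemma not_adj_comap_sum (hx : x ∈ A) (hy : y ∉ B) :
    ¬ ((T₁ ⊕g T₂).comap (splitEquiv A B).symm).Adj (.inl x) (.inr y) := by
  simp only [comap_adj, splitEquiv_symm_inl hx, splitEquiv_symm_inr hy]
  exact not_adj_sum_inl_inr _ _

variable [Fintype α] [Fintype β]

lemma reachableParts_comap_sum (hx : x ∈ A) (h₁ : T₁.Connected) :
    reachableParts ((T₁ ⊕g T₂).comap (splitEquiv A B).symm) x = (A, B) := by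
  refine reachableParts_eq_iff.mpr fun t => ?_
  rw [reachable_comap_sum_iff, splitEquiv_symm_inl hx, Equiv.symm_apply_apply]
  rcases t with u | w
  · simpa using (h₁.preconnected _ u).map Embedding.sumInl.toHom
  · simpa using not_reachable_sum_inl_inr _ _

lemma connected_comap_sum_sup_edge (hx : x ∈ A) (hy : y ∉ B) (h₁ : T₁.Connected)
    (h₂ : T₂.Connected) :
    ((T₁ ⊕g T₂).comap (splitEquiv A B).symm ⊔ edge (.inl x) (.inr y)).Connected := by
  refine (connected_iff_exists_forall_reachable _).mpr
    ⟨.inl x, (splitEquiv A B).forall_congr_right.mp fun t => ?_⟩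
  rcases t with u | w
  · exact ((reachableParts_eq_iff.mp (reachableParts_comap_sum hx h₁) (.inl u)).mpr rfl).mono
      le_sup_left
  · refine (adj_sup_edge _ Sum.inl_ne_inr).reachable.trans (Reachable.mono le_sup_left ?_)
    rw [reachable_comap_sum_iff, splitEquiv_symm_inr hy, Equiv.symm_apply_apply]
    exact (h₂.preconnected _ w).map Embedding.sumInr.toHom

lemma isTree_comap_sum_sup_edge (hx : x ∈ A) (hy : y ∉ B) (h₁ : T₁.IsTree)
    (h₂ : T₂.IsTree) :
    ((T₁ ⊕g T₂).comap (splitEquiv A B).symm ⊔ edge (.inl x) (.inr y)).IsTree := by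
  refine isTree_iff_connected_and_card.mpr
    ⟨connected_comap_sum_sup_edge hx hy h₁.connected h₂.connected, ?_⟩
  rw [card_edgeSet_sup_edge (not_adj_comap_sum hx hy) Sum.inl_ne_inr,
    Nat.card_congr (Iso.comap (splitEquiv A B).symm _).mapEdgeSet, card_edgeSet_sum,
    ← card_sum_add_card_sum_compl, ← (isTree_iff_connected_and_card.mp h₁).2,
    ← (isTree_iff_connected_and_card.mp h₂).2]
  omega

end Glue

section Count

variable {α β : Type*} [Fintype α] [Fintype β] [DecidableEq α] [DecidableEq β]

noncomputable def edgeMarkedTrees.cutParts (q : edgeMarkedTrees α β) : Finset α × Finset β :=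
  reachableParts (q.1.1 \ edge (.inl q.1.2.1) (.inr q.1.2.2)) q.1.2.1

noncomputable def edgeMarkedTreesFiberEquiv (A : Finset α) (B : Finset β) :
    {q : edgeMarkedTrees α β // q.cutParts = (A, B)} ≃
      (A × {b // b ∉ B}) × (bipartiteTrees A B × bipartiteTrees {a // a ∉ A} {b // b ∉ B}) where
  toFun q :=
    have hG : q.1.1.1 \ edge _ _ ⊔ edge _ _ = q.1.1.1 :=
      sdiff_sup_cancel ((edge_le_iff _).mpr (.inr q.1.2.2))
    have hT : (q.1.1.1 \ edge _ _ ⊔ edge _ _).IsTree := by rw [hG]; exact q.1.2.1.2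
    have hn : ¬ (q.1.1.1 \ edge (.inl q.1.1.2.1) (.inr q.1.1.2.2)).Adj
        (.inl q.1.1.2.1) (.inr q.1.1.2.2) := by simp [edge_adj]
    have hK := sdiff_le.trans q.1.2.1.1
    ⟨⟨⟨_, mem_of_reachableParts_eq q.2⟩, ⟨_, notMem_of_reachableParts_eq hT hn q.2⟩⟩,
      ⟨_, splitEquiv_comp_inl A B ▸ comap_sumMap_le_completeBipartiteGraph hK,
        (isTree_comap_splitEquiv hT hn q.2).1⟩,
      ⟨_, splitEquiv_comp_inr A B ▸ comap_sumMap_le_completeBipartiteGraph hK,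
        (isTree_comap_splitEquiv hT hn q.2).2⟩⟩
  invFun d :=
    have hn := not_adj_comap_sum (T₁ := d.2.1.1) (T₂ := d.2.2.1) d.1.1.2 d.1.2.2
    ⟨⟨(_ ⊔ edge (.inl d.1.1.1) (.inr d.1.2.1), d.1.1.1, d.1.2.1),
        ⟨sup_le (comap_sum_le_completeBipartiteGraph d.2.1.2.1 d.2.2.2.1)
            ((edge_le_iff _).mpr (.inr (by simp))),
          isTree_comap_sum_sup_edge d.1.1.2 d.1.2.2 d.2.1.2.2 d.2.2.2.2⟩,
        adj_sup_edge _ Sum.inl_ne_inr⟩, by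
      change reachableParts ((_ ⊔ edge _ _) \ edge _ _) _ = _
      rw [sup_sdiff_right_self, ((disjoint_edge _).mpr hn).sdiff_eq_left]
      exact reachableParts_comap_sum d.1.1.2 d.2.1.2.2.connected⟩
  left_inv q := by
    obtain ⟨⟨⟨G, x, y⟩, -, hxy⟩, hH⟩ := q
    refine Subtype.ext (Subtype.ext (Prod.ext ?_ rfl))
    dsimp only
    rw [comap_sum_comap_splitEquiv hH, sdiff_sup_cancel ((edge_le_iff _).mpr (.inr hxy))]
  right_inv d := by
    obtain ⟨⟨⟨x, hx⟩, ⟨y, hy⟩⟩, ⟨T₁, -⟩, ⟨T₂, -⟩⟩ := d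
    have hn := not_adj_comap_sum (T₁ := T₁) (T₂ := T₂) hx hy
    simp only [sup_sdiff_right_self, ((disjoint_edge _).mpr hn).sdiff_eq_left,
      comap_comap_sum_inl, comap_comap_sum_inr]

lemma card_edgeMarkedTrees :
    Nat.card (edgeMarkedTrees α β) = ∑ A : Finset α, ∑ B : Finset β,
      #A * (Fintype.card β - #B) *
        (Nbi #A #B 0 * Nbi (Fintype.card α - #A) (Fintype.card β - #B) 0) := by
  rw [← Nat.card_congr (Equiv.sigmaFiberEquiv edgeMarkedTrees.cutParts), Nat.card_sigma,
    Fintype.sum_prod_type]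
  refine Finset.sum_congr rfl fun A _ => Finset.sum_congr rfl fun B _ => ?_
  rw [Nat.card_congr (edgeMarkedTreesFiberEquiv A B), Nat.card_prod, Nat.card_prod,
    Nat.card_prod, card_bipartiteTrees, card_bipartiteTrees]
  simp [Fintype.card_subtype_compl]

end Count

lemma Finset.sum_finset_eq_sum_antidiagonal_choose {ι M : Type*} [Fintype ι] [DecidableEq ι]
    [AddCommMonoid M] (f : ℕ → ℕ → M) :
    ∑ A : Finset ι, f #A (Fintype.card ι - #A) =
      ∑ i ∈ antidiagonal (Fintype.card ι), (Fintype.card ι).choose i.1 • f i.1 i.2 := by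
  rw [← Finset.powerset_univ, Finset.sum_powerset_apply_card (fun k => f k (Fintype.card ι - k)),
    Finset.card_univ, Finset.Nat.sum_antidiagonal_eq_sum_range_succ_mk]

theorem nbi_recurrence (r s : ℕ) :
    (r + s) * Nbi r s 0 = Nbi r s 0 + ∑ i ∈ antidiagonal r, ∑ j ∈ antidiagonal s,
      r.choose i.1 * s.choose j.1 * (i.1 * Nbi i.1 j.1 0) * (j.2 * Nbi i.2 j.2 0) := by
  have h := card_edgeMarkedTrees_add (α := Fin r) (β := Fin s)
  rw [card_edgeMarkedTrees, ← nbi_zero_eq_card_bipartiteTrees, Fintype.card_fin,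
    Fintype.card_fin] at h
  rw [← h, add_comm]
  congr 1
  have inner (A : Finset (Fin r)) := Finset.sum_finset_eq_sum_antidiagonal_choose (ι := Fin s)
    fun j l => #A * l * (Nbi #A j 0 * Nbi (r - #A) l 0)
  have outer := Finset.sum_finset_eq_sum_antidiagonal_choose (ι := Fin r)
    fun i k => ∑ j ∈ antidiagonal s, s.choose j.1 * (i * j.2 * (Nbi i j.1 0 * Nbi k j.2 0))
  simp only [Fintype.card_fin, smul_eq_mul] at inner outer
  simp only [inner, outer, Finset.mul_sum]
  exact Finset.sum_congr rfl fun i _ => Finset.sum_congr rfl fun j _ => by ring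

theorem nbi_recurrence_div_factorial (r s : ℕ) :
    ((r + s) * Nbi r s 0 : ℚ) / (r.factorial * s.factorial) =
      (Nbi r s 0 : ℚ) / (r.factorial * s.factorial) +
        ∑ i ∈ antidiagonal r, ∑ j ∈ antidiagonal s,
          (i.1 * Nbi i.1 j.1 0 : ℚ) / (i.1.factorial * j.1.factorial) *
            ((j.2 * Nbi i.2 j.2 0 : ℚ) / (i.2.factorial * j.2.factorial)) := by
  have h := congrArg (Nat.cast : ℕ → ℚ) (nbi_recurrence r s)
  push_cast at h
  rw [h, add_div, Finset.sum_div]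
  congr 1
  refine Finset.sum_congr rfl fun i hi => ?_
  rw [Finset.sum_div]
  refine Finset.sum_congr rfl fun j hj => ?_
  rw [HasAntidiagonal.mem_antidiagonal] at hi hj
  subst hi hj
  rw [Nat.cast_add_choose, Nat.cast_add_choose]
  field_simp

lemma sum_antidiagonal_fin_two {M : Type*} [AddCommMonoid M] (m : Fin 2 →₀ ℕ)
    (F : (Fin 2 →₀ ℕ) → (Fin 2 →₀ ℕ) → M) :
    ∑ p ∈ antidiagonal m, F p.1 p.2 = ∑ i ∈ antidiagonal (m 0), ∑ j ∈ antidiagonal (m 1),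
      F ((finTwoArrowEquiv' ℕ).symm (i.1, j.1)) ((finTwoArrowEquiv' ℕ).symm (i.2, j.2)) := by
  rw [← Finset.sum_product']
  refine Finset.sum_equiv (((finTwoArrowEquiv' ℕ).prodCongr (finTwoArrowEquiv' ℕ)).trans
    (Equiv.prodProdProdComm _ _ _ _)) (fun p => ?_) (fun p _ => ?_)
  · simp [HasAntidiagonal.mem_antidiagonal, Finsupp.ext_iff, Fin.forall_fin_two]
  · simp only [Equiv.trans_apply, Equiv.prodCongr_apply, Prod.map_fst, Prod.map_snd,
      Equiv.prodProdProdComm_apply, Prod.mk.eta, Equiv.symm_apply_apply]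

namespace MvPowerSeries

variable {σ R : Type*} [CommSemiring R]

noncomputable def eulerOp (w : (σ →₀ ℕ) →+ R) (f : MvPowerSeries σ R) : MvPowerSeries σ R :=
  fun n => w n * coeff n f

lemma coeff_eulerOp (w : (σ →₀ ℕ) →+ R) (f : MvPowerSeries σ R) (n : σ →₀ ℕ) :
    coeff n (eulerOp w f) = w n * coeff n f := rfl

lemma eulerOp_add (w : (σ →₀ ℕ) →+ R) (f g : MvPowerSeries σ R) :
    eulerOp w (f + g) = eulerOp w f + eulerOp w g := by
  ext n
  simp only [coeff_eulerOp, map_add, mul_add]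

lemma eulerOp_mul (w : (σ →₀ ℕ) →+ R) (f g : MvPowerSeries σ R) :
    eulerOp w (f * g) = eulerOp w f * g + f * eulerOp w g := by
  classical
  ext n
  rw [coeff_eulerOp, map_add, coeff_mul, coeff_mul, coeff_mul, Finset.mul_sum,
    ← Finset.sum_add_distrib]
  refine Finset.sum_congr rfl fun p hp => ?_
  rw [← HasAntidiagonal.mem_antidiagonal.mp hp, map_add, coeff_eulerOp, coeff_eulerOp]
  ring

end MvPowerSeries

open MvPowerSeries

lemma Dx_eq_eulerOp : Dx = eulerOp ((Nat.castAddMonoidHom ℚ).comp (Finsupp.applyAddHom 0)) :=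
  rfl

lemma Dy_eq_eulerOp : Dy = eulerOp ((Nat.castAddMonoidHom ℚ).comp (Finsupp.applyAddHom 1)) :=
  rfl

lemma Dx_add (f g : MvPowerSeries (Fin 2) ℚ) : Dx (f + g) = Dx f + Dx g := by
  rw [Dx_eq_eulerOp, eulerOp_add]

lemma Dy_add (f g : MvPowerSeries (Fin 2) ℚ) : Dy (f + g) = Dy f + Dy g := by
  rw [Dy_eq_eulerOp, eulerOp_add]

lemma Dx_mul (f g : MvPowerSeries (Fin 2) ℚ) : Dx (f * g) = Dx f * g + f * Dx g := by
  rw [Dx_eq_eulerOp, eulerOp_mul]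

lemma Dy_mul (f g : MvPowerSeries (Fin 2) ℚ) : Dy (f * g) = Dy f * g + f * Dy g := by
  rw [Dy_eq_eulerOp, eulerOp_mul]

lemma Dx_Fk_zero : Dx (Fk 0) = Tx := by
  ext m
  simp only [Dx, Fk, Tx, coeff_apply, mul_div_assoc]

lemma Dy_Fk_zero : Dy (Fk 0) = Ty := by
  ext m
  simp only [Dy, Fk, Ty, coeff_apply, mul_div_assoc]

lemma Dx_Ty : Dx Ty = Dy Tx := by
  ext m
  simp only [Dx, Dy, Tx, Ty, coeff_apply]
  ring

lemma coeff_Tx_mul_Ty (m : Fin 2 →₀ ℕ) :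
    coeff m (Tx * Ty) = ∑ i ∈ antidiagonal (m 0), ∑ j ∈ antidiagonal (m 1),
      (i.1 * Nbi i.1 j.1 0 : ℚ) / (i.1.factorial * j.1.factorial) *
        ((j.2 * Nbi i.2 j.2 0 : ℚ) / (i.2.factorial * j.2.factorial)) := by
  rw [coeff_mul, sum_antidiagonal_fin_two m fun p q => coeff p Tx * coeff q Ty]
  simp [Tx, Ty, coeff_apply]

theorem Tx_add_Ty : Tx + Ty = Fk 0 + Tx * Ty := by
  ext m
  rw [map_add, map_add, coeff_Tx_mul_Ty]
  simp only [Tx, Ty, Fk, coeff_apply]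
  rw [← nbi_recurrence_div_factorial]
  ring

/-- `(1-T_y)·(D_x Z) + (1-T_x)·(D_y Z) = Z` and
`(1-T_y)·(D_x W) + (1-T_x)·(D_y W) = 2W`. -/
theorem stmt10 :
    (1 - Ty) * Dx Zs + (1 - Tx) * Dy Zs = Zs ∧
      (1 - Ty) * Dx Ws + (1 - Tx) * Dy Ws = 2 * Ws := by
  have hx : Dx Tx + Dx Ty = Tx + (Dx Tx * Ty + Tx * Dx Ty) := by
    simpa only [Dx_add, Dx_mul, Dx_Fk_zero] using congrArg Dx Tx_add_Ty
  have hy : Dy Tx + Dy Ty = Ty + (Dy Tx * Ty + Tx * Dy Ty) := by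
    simpa only [Dy_add, Dy_mul, Dy_Fk_zero] using congrArg Dy Tx_add_Ty
  simp only [Zs, Ws, Dx_add, Dy_add, Dx_mul, Dy_mul]
  constructor
  · linear_combination hx + hy + (Tx - Ty) * Dx_Ty
  · linear_combination Ty * hx + Tx * hy + (Tx - Ty) * Dx_Ty
end

section
/- For every integer n ≥ 1: ∑_{r=0}^{n} C(n,r)·r·N_bi(r,n-r,0) = n^{n-1}. -/
/-!
Encode a rooted forest on `V` with root set `S` by its parent map `p : V → V`. If `|V| = n` and
`|S| = k`, the number `f(S)` of such maps satisfies `f(S) · n = k · n ^ (n - k)` (Cayley's forest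
formula). Induct on `n`: deleting a root `s₀` turns its set `C` of children into roots, so
`f(S) = ∑_{C ⊆ Sᶜ} f(S \ {s₀} ∪ C)` on `V \ {s₀}`, and the binomial theorem closes the recursion.
For `k = 1` the parent map of a tree rooted at `ρ` is read off from distances to `ρ`, which gives
Cayley's `n ^ (n - 2)` trees.

A tree `T` together with a vertex `ρ` has exactly one bipartition `(R, Rᶜ)` with `ρ ∈ R`: the
vertices at even distance from `ρ`. Hence `∑_R |R| · #{spanning trees of K_{R,Rᶜ}}` counts trees
with a root, `n · n ^ (n - 2) = n ^ (n - 1)`, and grouping the sets `R` by size gives the sum.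
-/

open Finset

theorem Nat.sum_range_choose_mul_add_mul_pow (m k x : ℕ) :
    ∑ i ∈ range (m + 1), m.choose i * ((k + i) * x ^ (m - i)) =
      k * (x + 1) ^ m + m * (x + 1) ^ (m - 1) := by
  have binom (m : ℕ) : ∑ i ∈ range (m + 1), m.choose i * x ^ (m - i) = (x + 1) ^ m := by
    rw [add_comm x 1, add_pow]
    exact sum_congr rfl fun i _ => by rw [one_pow, one_mul, mul_comm, Nat.cast_id]
  have weighted : ∑ i ∈ range (m + 1), m.choose i * (i * x ^ (m - i)) =
      m * (x + 1) ^ (m - 1) := by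
    cases m with
    | zero => simp
    | succ m =>
      rw [sum_range_succ', Nat.add_sub_cancel, ← binom, mul_sum]
      simp only [zero_mul, mul_zero, add_zero]
      refine sum_congr rfl fun i _ => ?_
      rw [Nat.add_sub_add_right, ← mul_assoc, ← mul_assoc, ← Nat.add_one_mul_choose_eq]
  simp only [add_mul, mul_add, sum_add_distrib, ← binom, weighted, mul_sum]
  exact congrArg (· + _) (sum_congr rfl fun i _ => by ring)

theorem Nat.pow_sub_two_mul_self {n : ℕ} (hn : 1 ≤ n) : n ^ (n - 2) * n = n ^ (n - 1) := by
  obtain _ | _ | n := n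
  · omega
  · rfl
  · rw [← pow_succ]
    rfl

theorem Nat.card_subtype_eq_sum_card_fiberwise {α β : Type*} [Finite α] {P : α → Prop}
    {f : α → β} {t : Finset β} (h : ∀ a, P a → f a ∈ t) :
    Nat.card {a // P a} = ∑ b ∈ t, Nat.card {a // P a ∧ f a = b} := by
  classical
  have := Fintype.ofFinite α
  simp only [Nat.card_eq_fintype_card, Fintype.card_subtype, ← filter_filter]
  exact card_eq_sum_card_fiberwise fun a ha => h a (mem_filter.mp ha).2

variable {V : Type*}

/-- The rank `f` rules out cycles, so iterating `p` from any vertex reaches `S`. -/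
def IsRootedForest (p : V → V) (S : Finset V) : Prop :=
  (∀ s ∈ S, p s = s) ∧ ∃ f : V → ℕ, ∀ v ∉ S, f (p v) < f v

namespace IsRootedForest

variable {p : V → V} {S : Finset V} {ρ : V}

theorem apply_root (hp : IsRootedForest p {ρ}) : p ρ = ρ :=
  hp.1 ρ (mem_singleton_self ρ)

theorem nonempty [Nonempty V] (hp : IsRootedForest p S) : S.Nonempty := by
  obtain ⟨f, hf⟩ := hp.2
  by_contra hS
  exact Function.not_lt_argmin f _ (hf _ (by simp_all [not_nonempty_iff_eq_empty]))

end IsRootedForest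

theorem isRootedForest_univ_iff [Fintype V] {p : V → V} : IsRootedForest p univ ↔ p = id :=
  ⟨fun hp => funext fun v => hp.1 v (mem_univ v), by rintro rfl; exact ⟨fun _ _ => rfl, 0, by simp⟩⟩

def pruneRoot [DecidableEq V] (s₀ : V) (p : V → V) (v : {x // x ≠ s₀}) : {x // x ≠ s₀} :=
  if h : p v = s₀ then v else ⟨p v, h⟩

def graftRoot [DecidableEq V] (s₀ : V) (C : Finset V) (p : {x // x ≠ s₀} → {x // x ≠ s₀})
    (v : V) : V :=
  if h : v = s₀ ∨ v ∈ C then s₀ else p ⟨v, fun h' => h (.inl h')⟩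

section PruneRoot

variable [Fintype V] [DecidableEq V] {p : V → V} {S C : Finset V} {s₀ : V}

def children (p : V → V) (S : Finset V) (s₀ : V) : Finset V := {v ∈ Sᶜ | p v = s₀}

theorem IsRootedForest.pruneRoot (hp : IsRootedForest p S) :
    IsRootedForest (pruneRoot s₀ p) ((S ∪ children p S s₀).subtype (· ≠ s₀)) := by
  obtain ⟨hroot, f, hf⟩ := hp
  refine ⟨fun v hv => ?_, f ∘ (↑), fun v hv => ?_⟩
  · unfold _root_.pruneRoot
    split_ifs with h
    · rfl
    · simp only [mem_subtype, mem_union, children, mem_filter] at hv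
      exact Subtype.ext (hv.elim (hroot v) fun hc => absurd hc.2 h)
  · simp only [mem_subtype, mem_union, children, mem_filter, mem_compl, not_or, not_and] at hv
    rw [_root_.pruneRoot, dif_neg (hv.2 hv.1)]
    exact hf v hv.1

theorem IsRootedForest.graftRoot {p : {x // x ≠ s₀} → {x // x ≠ s₀}}
    (hp : IsRootedForest p ((S ∪ C).subtype (· ≠ s₀))) (hs₀ : s₀ ∈ S) (hC : C ⊆ Sᶜ) :
    IsRootedForest (graftRoot s₀ C p) S := by
  obtain ⟨hroot, f, hf⟩ := hp
  refine ⟨fun v hv => ?_, fun v => if h : v = s₀ then 0 else f ⟨v, h⟩ + 1, fun v hv => ?_⟩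
  · unfold _root_.graftRoot
    split_ifs with h
    · exact (h.resolve_right fun hC' => mem_compl.mp (hC hC') hv).symm
    · push Not at h
      exact congrArg Subtype.val (hroot _ (by simp [hv]))
  · have hv₀ : v ≠ s₀ := (ne_of_mem_of_not_mem hs₀ hv).symm
    unfold _root_.graftRoot
    split_ifs with h
    · simp [hv₀]
    · push Not at h
      simp only [(p ⟨v, hv₀⟩).2, dite_false, hv₀, add_lt_add_iff_right]
      exact hf _ (by simp [hv, h.2])

theorem children_graftRoot {p : {x // x ≠ s₀} → {x // x ≠ s₀}} (hs₀ : s₀ ∈ S) (hC : C ⊆ Sᶜ) :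
    children (graftRoot s₀ C p) S s₀ = C := by
  ext v
  rw [children, mem_filter, graftRoot]
  constructor
  · rintro ⟨hv, h⟩
    by_contra hvC
    rw [dif_neg (by rintro (rfl | h') <;> simp_all)] at h
    exact (p _).2 h
  · intro hv
    exact ⟨hC hv, dif_pos (.inr hv)⟩

/-- Deleting the root `s₀` makes its children roots; `graftRoot` reattaches them. -/
def pruneRootEquiv (hs₀ : s₀ ∈ S) (hC : C ⊆ Sᶜ) :
    {p : V → V // IsRootedForest p S ∧ children p S s₀ = C} ≃
      {p : {x // x ≠ s₀} → {x // x ≠ s₀} // IsRootedForest p ((S ∪ C).subtype (· ≠ s₀))} where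
  toFun p := ⟨pruneRoot s₀ p, by obtain ⟨p, hp, rfl⟩ := p; exact hp.pruneRoot⟩
  invFun p := ⟨graftRoot s₀ C p, p.2.graftRoot hs₀ hC, children_graftRoot hs₀ hC⟩
  left_inv := by
    rintro ⟨p, hp, rfl⟩
    ext v
    simp only [graftRoot, pruneRoot, children, mem_filter, mem_compl]
    split_ifs with h h'
    · rcases h with rfl | h
      exacts [(hp.1 _ hs₀).symm, h.2.symm]
    · exact absurd (.inr ⟨fun hv => h (.inl (hp.1 v hv ▸ h')), h'⟩) h
    · rfl
  right_inv := by
    rintro ⟨p, hp⟩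
    ext v
    simp only [graftRoot, pruneRoot, Subtype.coe_eta]
    split_ifs with h h' h'
    · exact congrArg Subtype.val (hp.1 v (by simp [h.resolve_left v.2])).symm
    · exact absurd rfl h'
    · exact absurd h' (p v).2
    · rfl

theorem IsRootedForest.card_eq_sum_children (hs₀ : s₀ ∈ S) :
    Nat.card {p : V → V // IsRootedForest p S} =
      ∑ C ∈ Sᶜ.powerset,
        Nat.card {p : {x // x ≠ s₀} → {x // x ≠ s₀} //
          IsRootedForest p ((S ∪ C).subtype (· ≠ s₀))} := by
  rw [Nat.card_subtype_eq_sum_card_fiberwise (f := (children · S s₀)) (t := Sᶜ.powerset)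
    fun p _ => mem_powerset.mpr (filter_subset _ _)]
  exact sum_congr rfl fun C hC => Nat.card_congr (pruneRootEquiv hs₀ (mem_powerset.mp hC))

theorem card_subtype_union_ne (hs₀ : s₀ ∈ S) (hC : C ⊆ Sᶜ) :
    #((S ∪ C).subtype (· ≠ s₀)) = #S + #C - 1 := by
  rw [card_subtype, filter_ne', card_erase_of_mem (mem_union_left C hs₀),
    card_union_of_disjoint (subset_compl_iff_disjoint_left.mp hC)]

end PruneRoot

/-- Cayley's forest formula `k · n ^ (n - k - 1)`, multiplied by `n` so that it also holds for
`k = n` without truncated subtraction. -/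
theorem card_isRootedForest_mul_card [Fintype V] (S : Finset V) :
    Nat.card {p : V → V // IsRootedForest p S} * Fintype.card V =
      #S * Fintype.card V ^ (Fintype.card V - #S) := by
  classical
  induction hn : Fintype.card V generalizing V S with
  | zero => simp [Nat.le_zero.mp (hn ▸ S.card_le_univ)]
  | succ n ih =>
    have : Nonempty V := Fintype.card_pos_iff.mp (by omega)
    rcases S.eq_empty_or_nonempty with rfl | ⟨s₀, hs₀⟩
    · have : IsEmpty {p : V → V // IsRootedForest p ∅} := ⟨fun p => by simpa using p.2.nonempty⟩
      simp
    by_cases hS : S = univ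
    · simp [hS, isRootedForest_univ_iff, hn]
    have hSc : #Sᶜ = n + 1 - #S := by rw [card_compl, hn]
    have hk : 1 ≤ #S := card_pos.mpr ⟨s₀, hs₀⟩
    have hm : 1 ≤ #Sᶜ := by
      have := card_lt_card (ssubset_univ_iff.mpr hS)
      rw [card_univ, hn] at this
      omega
    have hcard : Fintype.card {x // x ≠ s₀} = n := by simp [hn]
    have hrec : Nat.card {p : V → V // IsRootedForest p S} * n =
        (#S - 1) * (n + 1) ^ #Sᶜ + #Sᶜ * (n + 1) ^ (#Sᶜ - 1) := by
      rw [IsRootedForest.card_eq_sum_children hs₀, sum_mul,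
        ← Nat.sum_range_choose_mul_add_mul_pow]
      calc _ = ∑ C ∈ Sᶜ.powerset, (#S - 1 + #C) * n ^ (#Sᶜ - #C) := by
            refine sum_congr rfl fun C hC => ?_
            have hCS := mem_powerset.mp hC
            have := card_le_card hCS
            rw [ih _ hcard, card_subtype_union_ne hs₀ hCS]
            congr 2 <;> omega
        _ = _ := by
            simp only [sum_powerset_apply_card (fun i => (#S - 1 + i) * n ^ (#Sᶜ - i)),
              smul_eq_mul]
    apply Nat.eq_of_mul_eq_mul_right (show 0 < n by omega)
    rw [mul_right_comm, hrec, ← hSc]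
    obtain ⟨a, ha⟩ : ∃ a, #S = a + 1 := ⟨#S - 1, by omega⟩
    obtain ⟨b, hb⟩ : ∃ b, #Sᶜ = b + 1 := ⟨#Sᶜ - 1, by omega⟩
    obtain rfl : n = a + b + 1 := by omega
    rw [ha, hb, Nat.add_sub_cancel, Nat.add_sub_cancel]
    ring

theorem SimpleGraph.Reachable.exists_adj_dist_add_one_eq {G : SimpleGraph V} {u v : V}
    (h : G.Reachable u v) (hne : u ≠ v) : ∃ w, G.Adj v w ∧ G.dist u w + 1 = G.dist u v := by
  obtain ⟨q, hq⟩ := h.symm.exists_walk_length_eq_dist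
  cases q with
  | nil => exact absurd rfl hne
  | @cons _ w _ hadj q =>
    obtain ⟨r, hr⟩ := q.reachable.exists_walk_length_eq_dist
    have h₁ := dist_le q
    have h₂ := dist_le (.cons hadj r)
    rw [SimpleGraph.Walk.length_cons] at hq h₂
    exact ⟨w, hadj, by rw [G.dist_comm, G.dist_comm (u := u)]; omega⟩

def parentGraph (p : V → V) : SimpleGraph V := .fromRel fun a b => p a = b

section ParentGraph

variable {p q : V → V} {ρ : V}

theorem parentGraph_adj {a b : V} : (parentGraph p).Adj a b ↔ a ≠ b ∧ (p a = b ∨ p b = a) := by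
  simp [parentGraph]

namespace IsRootedForest

theorem apply_ne_self (hp : IsRootedForest p {ρ}) {v : V} (hv : v ≠ ρ) : p v ≠ v := by
  obtain ⟨f, hf⟩ := hp.2
  exact fun h => (hf v (by simpa using hv)).ne (congrArg f h)

theorem parentGraph_adj_apply (hp : IsRootedForest p {ρ}) {v : V} (hv : v ≠ ρ) :
    (parentGraph p).Adj v (p v) :=
  parentGraph_adj.mpr ⟨(hp.apply_ne_self hv).symm, .inl rfl⟩

theorem reachable_parentGraph (hp : IsRootedForest p {ρ}) (v : V) :
    (parentGraph p).Reachable ρ v := by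
  obtain ⟨f, hf⟩ := hp.2
  induction h : f v using Nat.strong_induction_on generalizing v with
  | _ n ih =>
    by_cases hv : v = ρ
    · exact hv ▸ .rfl
    exact (ih _ (h ▸ hf v (by simpa using hv)) (p v) rfl).trans
      (hp.parentGraph_adj_apply hv).symm.reachable

theorem connected_parentGraph (hp : IsRootedForest p {ρ}) : (parentGraph p).Connected :=
  (SimpleGraph.connected_iff_exists_forall_reachable _).mpr ⟨ρ, hp.reachable_parentGraph⟩

theorem dist_parentGraph_apply_add_one (hp : IsRootedForest p {ρ}) {v : V} (hv : v ≠ ρ) :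
    (parentGraph p).dist ρ (p v) + 1 = (parentGraph p).dist ρ v := by
  induction h : (parentGraph p).dist ρ v using Nat.strong_induction_on generalizing v with
  | _ n ih =>
    obtain ⟨w, hadj, hw⟩ := (hp.reachable_parentGraph v).exists_adj_dist_add_one_eq (Ne.symm hv)
    obtain ⟨-, rfl | rfl⟩ := parentGraph_adj.mp hadj
    · exact hw.trans h
    · have hw₀ : w ≠ ρ := by rintro rfl; exact hv hp.apply_root
      have := ih _ (by omega) hw₀ rfl
      omega

theorem card_edgeSet_parentGraph_add_one [Finite V] (hp : IsRootedForest p {ρ}) :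
    Nat.card (parentGraph p).edgeSet + 1 = Nat.card V := by
  have hbij : Function.Bijective fun v : {v // v ≠ ρ} =>
      (⟨s(v, p v), hp.parentGraph_adj_apply v.2⟩ : (parentGraph p).edgeSet) := by
    refine ⟨fun ⟨a, ha⟩ ⟨b, hb⟩ hab => ?_, fun ⟨e, he⟩ => ?_⟩
    · have hab := Sym2.eq_iff.mp (congrArg Subtype.val hab)
      dsimp only at hab
      obtain ⟨h, -⟩ | ⟨hab, hba⟩ := hab
      · exact Subtype.ext h
      · have ha' := hp.dist_parentGraph_apply_add_one ha
        have hb' := hp.dist_parentGraph_apply_add_one hb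
        rw [hba] at ha'
        rw [← hab] at hb'
        omega
    · induction e using Sym2.ind with
      | _ a b =>
      rw [SimpleGraph.mem_edgeSet, parentGraph_adj] at he
      obtain ⟨hne, h | h⟩ := he
      · refine ⟨⟨a, fun ha => hne ?_⟩, Subtype.ext (by simp [h])⟩
        rw [← h, ha, hp.apply_root]
      · refine ⟨⟨b, fun hb => hne ?_⟩, Subtype.ext (by simp [← h, Sym2.eq_swap])⟩
        rw [← h, hb, hp.apply_root]
  have := Fintype.ofFinite V
  have := Fintype.card_pos (α := V) (h := ⟨ρ⟩)
  classical
  rw [← Nat.card_congr (Equiv.ofBijective _ hbij)]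
  simp only [Nat.card_eq_fintype_card, Fintype.card_subtype_compl, Fintype.card_unique]
  omega

theorem isTree_parentGraph [Finite V] (hp : IsRootedForest p {ρ}) : (parentGraph p).IsTree :=
  SimpleGraph.isTree_iff_connected_and_card.mpr
    ⟨hp.connected_parentGraph, hp.card_edgeSet_parentGraph_add_one⟩

/-- If `q v ≠ p v`, then `q v` is a child of `v` for `p`, hence one step farther from `ρ`,
while it is one step closer for `q`. -/
theorem eq_of_parentGraph_eq (hp : IsRootedForest p {ρ}) (hq : IsRootedForest q {ρ})
    (h : parentGraph p = parentGraph q) : p = q := by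
  funext v
  by_cases hv : v = ρ
  · rw [hv, hp.apply_root, hq.apply_root]
  obtain ⟨-, hpq | hqp⟩ := parentGraph_adj.mp (h ▸ hq.parentGraph_adj_apply hv)
  · exact hpq
  · have hqv : q v ≠ ρ := by
      rintro hqv
      rw [hqv, hp.apply_root] at hqp
      exact hv hqp.symm
    have := hp.dist_parentGraph_apply_add_one hqv
    have := hq.dist_parentGraph_apply_add_one hv
    rw [hqp, ← h] at *
    omega

end IsRootedForest

theorem SimpleGraph.IsTree.exists_parentGraph_eq {T : SimpleGraph V} (hT : T.IsTree) (ρ : V) :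
    ∃ p, IsRootedForest p {ρ} ∧ parentGraph p = T := by
  classical
  choose! par hpar using fun v (hv : v ≠ ρ) =>
    (hT.connected ρ v).exists_adj_dist_add_one_eq (Ne.symm hv)
  set p := Function.update par ρ ρ
  have hpv {v : V} (hv : v ≠ ρ) : p v = par v := Function.update_of_ne hv _ _
  have hp : IsRootedForest p {ρ} := by
    refine ⟨by simp [p], T.dist ρ, fun v hv => ?_⟩
    rw [hpv (by simpa using hv), ← (hpar v (by simpa using hv)).2]
    exact Nat.lt_succ_self _
  refine ⟨p, hp, (isTree_iff_minimal_connected.mp hT).eq_of_le hp.connected_parentGraph ?_⟩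
  intro a b hab
  obtain ⟨hne, rfl | rfl⟩ := parentGraph_adj.mp hab
  · have ha : a ≠ ρ := fun ha => hne (by simp [p, ha])
    exact hpv ha ▸ (hpar a ha).1
  · have hb : b ≠ ρ := fun hb => hne (by simp [p, hb])
    exact (hpv hb ▸ (hpar b hb).1).symm

end ParentGraph

noncomputable def IsRootedForest.parentGraphEquiv [Finite V] (ρ : V) :
    {p : V → V // IsRootedForest p {ρ}} ≃ {T : SimpleGraph V // T.IsTree} :=
  .ofBijective (fun p => ⟨parentGraph p, p.2.isTree_parentGraph⟩)
    ⟨fun p q h => Subtype.ext (p.2.eq_of_parentGraph_eq q.2 (congrArg Subtype.val h)),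
      fun T => let ⟨p, hp, h⟩ := T.2.exists_parentGraph_eq ρ; ⟨⟨p, hp⟩, Subtype.ext h⟩⟩

theorem SimpleGraph.card_isTree [Fintype V] [Nonempty V] :
    Nat.card {T : SimpleGraph V // T.IsTree} = Fintype.card V ^ (Fintype.card V - 2) := by
  obtain ⟨ρ⟩ := ‹Nonempty V›
  have h := card_isRootedForest_mul_card {ρ}
  rw [card_singleton, one_mul, Nat.card_congr (IsRootedForest.parentGraphEquiv ρ),
    ← Nat.pow_sub_two_mul_self Fintype.card_pos] at h
  exact Nat.eq_of_mul_eq_mul_right Fintype.card_pos h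

namespace SimpleGraph

variable {G T : SimpleGraph V}

theorem isBipartiteWith_compl_iff {s : Set V} :
    G.IsBipartiteWith s sᶜ ↔ ∀ ⦃v w⦄, G.Adj v w → (v ∈ s ↔ w ∉ s) := by
  refine ⟨fun h v w hvw => ?_, fun h => ⟨disjoint_compl_right, fun v w hvw => ?_⟩⟩
  · rcases h.mem_of_adj hvw with ⟨hv, hw⟩ | ⟨hv, hw⟩ <;> simp_all
  · have := h hvw
    by_cases hv : v ∈ s <;> simp_all

theorem IsTree.isBipartiteWith_compl_iff_even_dist (hT : T.IsTree) {s : Set V} {ρ : V}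
    (hρ : ρ ∈ s) : T.IsBipartiteWith s sᶜ ↔ ∀ v, v ∈ s ↔ Even (T.dist ρ v) := by
  rw [isBipartiteWith_compl_iff]
  refine ⟨fun h v => ?_, fun h v w hvw => ?_⟩
  · induction hd : T.dist ρ v using Nat.strong_induction_on generalizing v with
    | _ d ih =>
    by_cases hv : v = ρ
    · subst hv
      simp [← hd, hρ]
    obtain ⟨w, hvw, hw⟩ := (hT.connected ρ v).exists_adj_dist_add_one_eq (Ne.symm hv)
    rw [h hvw, ih _ (by omega) w rfl, ← hd, ← hw, Nat.even_add_one]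
  · rw [h, h]
    rcases hT.dist_eq_dist_add_one_of_adj ρ hvw with hd | hd <;> simp [hd, Nat.even_add_one]

theorem sum_card_mul_card_isTree_isBipartiteWith [Fintype V] :
    ∑ R : Finset V, #R * Nat.card {T : SimpleGraph V // T.IsTree ∧ T.IsBipartiteWith R (↑R)ᶜ} =
      Fintype.card V * Nat.card {T : SimpleGraph V // T.IsTree} := by
  classical
  have fiber (R : Finset V) (ρ : V) :
      Nat.card {T : SimpleGraph V // T.IsTree ∧ ({v | Even (T.dist ρ v)} : Finset V) = R} =
        if ρ ∈ R then Nat.card {T : SimpleGraph V // T.IsTree ∧ T.IsBipartiteWith R (↑R)ᶜ}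
        else 0 := by
    split_ifs with hρ
    · refine Nat.card_congr (Equiv.subtypeEquivRight fun T => and_congr_right fun hT => ?_)
      rw [hT.isBipartiteWith_compl_iff_even_dist (s := ↑R) hρ, Finset.ext_iff]
      simp [iff_comm]
    · refine Nat.card_eq_zero.mpr (.inl ⟨fun T => hρ ?_⟩)
      simp [← T.2.2]
  calc _ = ∑ R : Finset V, ∑ ρ,
        Nat.card {T : SimpleGraph V // T.IsTree ∧ ({v | Even (T.dist ρ v)} : Finset V) = R} := by
        simp only [fiber, Fintype.sum_ite_mem, sum_const, smul_eq_mul]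
    _ = ∑ ρ : V, Nat.card {T : SimpleGraph V // T.IsTree} := by
        rw [sum_comm]
        exact sum_congr rfl fun ρ _ =>
          (Nat.card_subtype_eq_sum_card_fiberwise fun _ _ => mem_univ _).symm
    _ = _ := by simp

theorem isBipartiteWith_range_inl_range_inr_iff {α β : Type*} {G : SimpleGraph (α ⊕ β)} :
    G.IsBipartiteWith (Set.range .inl) (Set.range .inr) ↔
      (∀ a b, ¬ G.Adj (.inl a) (.inl b)) ∧ ∀ a b, ¬ G.Adj (.inr a) (.inr b) := by
  rw [← Set.compl_range_inl, isBipartiteWith_compl_iff]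
  refine ⟨fun h => ⟨fun a b hab => by simpa using h hab, fun a b hab => by simpa using h hab⟩,
    fun h v w hvw => ?_⟩
  rcases v with a | a <;> rcases w with b | b <;> simp_all

theorem isBipartiteWith_comap_preimage_iff {W : Type*} {f : W → V} (hf : f.Surjective)
    {s t : Set V} :
    (G.comap f).IsBipartiteWith (f ⁻¹' s) (f ⁻¹' t) ↔ G.IsBipartiteWith s t := by
  refine ⟨fun ⟨hd, h⟩ => ⟨(Set.disjoint_preimage_iff hf).mp hd, fun v w hvw => ?_⟩,
    fun ⟨hd, h⟩ => ⟨(Set.disjoint_preimage_iff hf).mpr hd, fun x y hxy => h hxy⟩⟩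
  obtain ⟨x, rfl⟩ := hf v
  obtain ⟨y, rfl⟩ := hf w
  exact h (by simpa using hvw)

theorem card_isTree_isBipartiteWith_congr {W : Type*} (e : V ≃ W) (s t : Set V) :
    Nat.card {G : SimpleGraph V // G.IsTree ∧ G.IsBipartiteWith s t} =
      Nat.card {G : SimpleGraph W //
        G.IsTree ∧ G.IsBipartiteWith (e.symm ⁻¹' s) (e.symm ⁻¹' t)} :=
  Nat.card_congr <| e.simpleGraph.subtypeEquiv fun G => by
    rw [Equiv.simpleGraph_apply, (Iso.comap e.symm G).isTree_iff,
      isBipartiteWith_comap_preimage_iff e.symm.surjective]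

end SimpleGraph

theorem nbi_zero_eq_card (r s : ℕ) :
    Nbi r s 0 = Nat.card {G : SimpleGraph (Fin r ⊕ Fin s) //
      G.IsTree ∧ G.IsBipartiteWith (Set.range .inl) (Set.range .inr)} := by
  refine Nat.card_congr (Equiv.subtypeEquivRight fun G => ?_)
  rw [SimpleGraph.isTree_iff_connected_and_card,
    SimpleGraph.isBipartiteWith_range_inl_range_inr_iff, Nat.card_sum, Nat.card_fin, Nat.card_fin]
  constructor
  · rintro ⟨hG, hl, hr, he⟩
    have := hG.nonempty
    have : 0 < r + s := by simpa using Nat.card_pos (α := Fin r ⊕ Fin s)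
    exact ⟨⟨hG, by omega⟩, hl, hr⟩
  · rintro ⟨⟨hG, he⟩, hl, hr⟩
    exact ⟨hG, hl, hr, by omega⟩

theorem nbi_zero_eq_card_finset [Fintype V] (R : Finset V) :
    Nbi #R (Fintype.card V - #R) 0 =
      Nat.card {T : SimpleGraph V // T.IsTree ∧ T.IsBipartiteWith R (↑R)ᶜ} := by
  classical
  have hRc : Fintype.card {x // x ∉ R} = Fintype.card V - #R := by
    simp [Fintype.card_subtype_compl]
  let e : Fin #R ⊕ Fin (Fintype.card V - #R) ≃ V :=
    (R.equivFin.symm.sumCongr (Fintype.equivFinOfCardEq hRc).symm).trans (Equiv.sumCompl (· ∈ R))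
  have hl : e.symm ⁻¹' Set.range .inl = R := by
    ext x
    by_cases hx : x ∈ R <;> simp [e, Equiv.sumCompl, hx]
  have hr : e.symm ⁻¹' Set.range .inr = (↑R)ᶜ := by
    rw [← Set.compl_range_inl, Set.preimage_compl, hl]
  rw [nbi_zero_eq_card, SimpleGraph.card_isTree_isBipartiteWith_congr e, hl, hr]

/-- For every `n ≥ 1`: `∑_{r=0}^{n} C(n,r)·r·N_bi(r,n-r,0) = n^{n-1}`. -/
theorem stmt12 (n : ℕ) (hn : 1 ≤ n) :
    ∑ r ∈ Finset.range (n + 1), n.choose r * r * Nbi r (n - r) 0 = n ^ (n - 1) := by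
  have : Nonempty (Fin n) := ⟨⟨0, hn⟩⟩
  have trees := SimpleGraph.sum_card_mul_card_isTree_isBipartiteWith (V := Fin n)
  simp only [← nbi_zero_eq_card_finset, Fintype.card_fin] at trees
  calc ∑ r ∈ range (n + 1), n.choose r * r * Nbi r (n - r) 0
      = ∑ R : Finset (Fin n), #R * Nbi #R (n - #R) 0 := by
        rw [← powerset_univ, sum_powerset_apply_card (fun r => r * Nbi r (n - r) 0)]
        simp [mul_assoc]
    _ = n * n ^ (n - 2) := by rw [trees, SimpleGraph.card_isTree, Fintype.card_fin]
    _ = n ^ (n - 1) := by rw [mul_comm, Nat.pow_sub_two_mul_self hn]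
end
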